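/- For any n×n complex matrix X, the centralizer group G^X = {g ∈ GL_n(ℂ) : gX = Xg} acts on ℂ^n with finitely many orbits. -/

import Mathlib

/-!
Through `X`, the space `K^ι` is a finitely generated torsion `K[X]`-module, hence a direct sum of
cyclic modules `K[X] ⧸ (p_i ^ e_i)` with `p_i` irreducible, and its `K[X]`-linear automorphisms
are exactly the invertible matrices commuting with `X`. In `K[X] ⧸ (p ^ e)` every element is a
unit times `p ^ a` for some `a ≤ e`, so rescaling each summand by a unit moves any vector to one
of the finitely many vectors `(p_i ^ a_i)_i` with `a_i ≤ e_i`.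
-/

open Matrix Polynomial DirectSum

section PID

variable {R : Type*} [CommRing R] [IsDomain R] [IsPrincipalIdealRing R]

theorem Ideal.Quotient.exists_isUnit_mul_mk_pow {p : R} (hp : Irreducible p) (e : ℕ)
    (x : R ⧸ Ideal.span {p ^ e}) :
    ∃ c, IsUnit c ∧ ∃ a ≤ e, x = c * Ideal.Quotient.mk _ (p ^ a) := by
  obtain ⟨f, rfl⟩ := Ideal.Quotient.mk_surjective x
  have mk_eq_zero {y : R} (hy : p ^ e ∣ y) : Ideal.Quotient.mk (Ideal.span {p ^ e}) y = 0 :=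
    Ideal.Quotient.eq_zero_iff_mem.mpr (Ideal.mem_span_singleton.mpr hy)
  by_cases hf : f = 0
  · exact ⟨1, isUnit_one, e, le_rfl, by rw [hf, map_zero, mk_eq_zero dvd_rfl, mul_zero]⟩
  obtain ⟨a, y, hpy, rfl⟩ := WfDvdMonoid.max_power_factor hf hp
  by_cases hea : e ≤ a
  · refine ⟨1, isUnit_one, e, le_rfl, ?_⟩
    rw [mk_eq_zero dvd_rfl, mk_eq_zero (dvd_mul_of_dvd_left (pow_dvd_pow p hea) y), mul_zero]
  have := PrincipalIdealRing.isMaximal_of_irreducible hp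
  refine ⟨Ideal.Quotient.mk _ y, ?_, a, (not_le.mp hea).le, by rw [map_mul, mul_comm]⟩
  rw [← Ideal.span_singleton_pow]
  exact Ideal.Quotient.isUnit_mk_pow_of_notMem _ (mt Ideal.mem_span_singleton.mp hpy)

theorem DirectSum.exists_finite_linearEquiv_orbit_reps {ι : Type*} [Fintype ι]
    {p : ι → R} (hp : ∀ i, Irreducible (p i)) (e : ι → ℕ) :
    ∃ S : Set (⨁ i, R ⧸ R ∙ p i ^ e i), S.Finite ∧
      ∀ x, ∃ s ∈ S, ∃ g : (⨁ i, R ⧸ R ∙ p i ^ e i) ≃ₗ[R] ⨁ i, R ⧸ R ∙ p i ^ e i, g s = x := by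
  refine ⟨Set.range fun a : (Π i, Fin (e i + 1)) =>
    DFinsupp.equivFunOnFintype.symm fun i => Ideal.Quotient.mk _ (p i ^ (a i : ℕ)),
    Set.finite_range _, fun x => ?_⟩
  choose c hc a hae hx using fun i => Ideal.Quotient.exists_isUnit_mul_mk_pow (hp i) (e i) (x i)
  refine ⟨_, ⟨fun i => ⟨a i, Nat.lt_succ_of_le (hae i)⟩, rfl⟩,
    DFinsupp.mapRange.linearEquiv fun i => DistribMulAction.toLinearEquiv R _ (hc i).unit, ?_⟩
  ext i
  rw [DFinsupp.mapRange.linearEquiv_apply, DFinsupp.mapRange_apply, hx i]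
  rfl

theorem Module.IsTorsion.exists_finite_linearEquiv_orbit_reps {M : Type*} [AddCommGroup M]
    [Module R M] [Module.Finite R M] (hM : Module.IsTorsion R M) :
    ∃ S : Set M, S.Finite ∧ ∀ x, ∃ s ∈ S, ∃ g : M ≃ₗ[R] M, g s = x := by
  obtain ⟨ι, _, p, hp, e, ⟨F⟩⟩ := Module.equiv_directSum_of_isTorsion hM
  obtain ⟨S, hS, hreps⟩ := DirectSum.exists_finite_linearEquiv_orbit_reps hp e
  refine ⟨F.symm '' S, hS.image _, fun x => ?_⟩
  obtain ⟨s, hs, g, hg⟩ := hreps (F x)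
  exact ⟨F.symm s, Set.mem_image_of_mem _ hs, F.trans (g.trans F.symm), by simp [hg]⟩

end PID

namespace Matrix

section CommRing

variable {R ι : Type*} [CommRing R] [Fintype ι] [DecidableEq ι]

theorem exists_GL_mulVec_eq (e : (ι → R) ≃ₗ[R] (ι → R)) :
    ∃ G : GL ι R, ∀ v, (G : Matrix ι ι R) *ᵥ v = e v :=
  ⟨GeneralLinearGroup.toLin.symm (LinearMap.GeneralLinearGroup.ofLinearEquiv e), fun v => by
    rw [← mulVecLin_apply, ← GeneralLinearGroup.toLin_apply, MulEquiv.apply_symm_apply]; rfl⟩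

theorem exists_GL_commute_of_aeval_linearEquiv (X : Matrix ι ι R)
    (g : Module.AEval' (toLin' X) ≃ₗ[R[X]] Module.AEval' (toLin' X)) :
    ∃ G : GL ι R, Commute (G : Matrix ι ι R) X ∧
      ∀ v, (G : Matrix ι ι R) *ᵥ v = (Module.AEval'.of _).symm (g (Module.AEval'.of _ v)) := by
  obtain ⟨G, hG⟩ := exists_GL_mulVec_eq
    ((Module.AEval'.of (toLin' X)).trans ((g.restrictScalars R).trans (Module.AEval'.of _).symm))
  refine ⟨G, toLin'.injective (LinearMap.ext fun v => ?_), hG⟩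
  simp only [toLin'_mul, LinearMap.comp_apply, toLin'_apply, hG, LinearEquiv.trans_apply,
    LinearEquiv.restrictScalars_apply]
  rw [← toLin'_apply X v, ← Module.AEval'.X_smul_of, map_smul, Module.AEval'.of_symm_X_smul,
    toLin'_apply]

def centralizerOrbit (X : Matrix ι ι R) (v : ι → R) : Set (ι → R) :=
  {w | ∃ g : GL ι R, (g : Matrix ι ι R) * X = X * g ∧ (g : Matrix ι ι R) *ᵥ v = w}

theorem centralizerOrbit_eq_of_mem {X : Matrix ι ι R} {v w : ι → R}
    (h : w ∈ centralizerOrbit X v) : centralizerOrbit X w = centralizerOrbit X v := by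
  obtain ⟨g, hgX, rfl⟩ := h
  ext z
  constructor
  · rintro ⟨h, hhX, rfl⟩
    exact ⟨h * g, Commute.mul_left hhX hgX, by simp [mulVec_mulVec]⟩
  · rintro ⟨h, hhX, rfl⟩
    refine ⟨h * g⁻¹, Commute.mul_left hhX (Commute.units_inv_left hgX), ?_⟩
    simp [mulVec_mulVec, mul_assoc]

end CommRing

theorem exists_finite_centralizer_orbit_reps {K ι : Type*} [Field K] [Fintype ι] [DecidableEq ι]
    (X : Matrix ι ι K) :
    ∃ S : Set (ι → K), S.Finite ∧
      ∀ v, ∃ s ∈ S, ∃ G : GL ι K, Commute (G : Matrix ι ι K) X ∧ (G : Matrix ι ι K) *ᵥ s = v := by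
  obtain ⟨S, hS, hreps⟩ := (Module.AEval.isTorsion_of_finiteDimensional K (ι → K)
    (toLin' X)).exists_finite_linearEquiv_orbit_reps
  refine ⟨(Module.AEval'.of _).symm '' S, hS.image _, fun v => ?_⟩
  obtain ⟨s, hs, g, hg⟩ := hreps (Module.AEval'.of _ v)
  obtain ⟨G, hGX, hG⟩ := exists_GL_commute_of_aeval_linearEquiv X g
  exact ⟨_, Set.mem_image_of_mem _ hs, G, hGX, by simp [hG, hg]⟩

end Matrix

/-- For any `n×n` complex matrix `X`, the centralizer group
`G^X = {g ∈ GL_n(ℂ) : gX = Xg}` acts on `ℂ^n` with finitely many orbits. -/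
theorem stmt3 (n : ℕ) (X : Matrix (Fin n) (Fin n) ℂ) :
    {O : Set (Fin n → ℂ) | ∃ v : Fin n → ℂ,
      O = {w | ∃ g : GL (Fin n) ℂ,
        (↑g : Matrix (Fin n) (Fin n) ℂ) * X = X * (↑g : Matrix (Fin n) (Fin n) ℂ) ∧
        (↑g : Matrix (Fin n) (Fin n) ℂ) *ᵥ v = w}}.Finite := by
  obtain ⟨S, hS, hreps⟩ := X.exists_finite_centralizer_orbit_reps
  refine (hS.image (centralizerOrbit X)).subset ?_
  rintro O ⟨v, rfl⟩
  obtain ⟨s, hs, g, hg, rfl⟩ := hreps v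
  exact ⟨s, hs, (centralizerOrbit_eq_of_mem ⟨g, hg, rfl⟩).symm⟩
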